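/- Let φ be a smooth solution of the wave equation on the causal-exterior region r > |t| of Minkowski space, φ = φ(t,r,θ,φ), that is asymptotically regular of order 1 with respect to the standard hyperbolic completion Ω = (r² - t²)^{-1/2}. Then the zeroth-order remnant field φ⁰ := (Ω^{-1} φ)|_{Ω=0} on the unit hyperboloid H satisfies D² φ⁰ = φ⁰, and more generally, for every n ≥ 0 the n-th remnant φⁿ (the n-th Lie derivative of Ω^{-1}φ along the rescaled normal, evaluated on H) satisfies D² φⁿ = (1 - n²) φⁿ. -/

import Mathlib

/-
Common extrinsic setup (used in all files).

We work in ℝ⁴ with the Minkowski inner product of signature (+,+,+,-) (CONTEXT 0).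
`Hb` is the unit hyperboloid H = {x | ⟨x,x⟩ = 1}, `Ur` the open exterior region
{⟨x,x⟩ > 0} on which fields on H are represented (only their restriction to H matters,
since every intrinsic operator below first composes with the radial retraction `ret`,
i.e. with the 0-homogeneous extension).

Standard facts about hypersurfaces give the following *definitions* of the intrinsic
(Levi-Civita) operators of the induced metric q on H in terms of ambient derivatives of
the 0-homogeneous extension:
 * the induced metric q at x ∈ H is the restriction of ⟨·,·⟩ to the tangent space
   {u | ⟨x,u⟩ = 0};
 * the intrinsic Hessian D_aD_b f on tangent vectors is the ambient Hessian of the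
   0-homogeneous extension (the second-fundamental-form correction vanishes because the
   0-homogeneous extension has radial derivative 0);
 * the intrinsic gradient D^a f is the ambient Minkowski gradient of the 0-homogeneous
   extension (automatically tangent);
 * the intrinsic Laplacian D² f = q^{ab} D_aD_b f is the ambient wave operator applied
   to the 0-homogeneous extension;
 * the intrinsic divergence D_a V^a of a tangent field is the ambient divergence of its
   0-homogeneous extension.
-/

noncomputable section

open scoped BigOperators

/-- ℝ⁴. -/
abbrev E4 : Type := Fin 4 → ℝ

/-- The signature (+,+,+,-). -/
def sg (i : Fin 4) : ℝ := if i = 3 then -1 else 1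

/-- The Minkowski inner product ⟨x,y⟩ = x₀y₀ + x₁y₁ + x₂y₂ − x₃y₃. -/
def mk4 (x y : E4) : ℝ := ∑ i, sg i * x i * y i

/-- The unit hyperboloid H = {x | ⟨x,x⟩ = 1}. -/
def Hb : Set E4 := {x | mk4 x x = 1}

/-- The exterior region {x | ⟨x,x⟩ > 0}. -/
def Ur : Set E4 := {x | 0 < mk4 x x}

/-- Radial retraction of the exterior region onto H. -/
def ret (x : E4) : E4 := (Real.sqrt (mk4 x x))⁻¹ • x

/-- 0-homogeneous extension of (the H-restriction of) a scalar field. -/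
def Hz (f : E4 → ℝ) : E4 → ℝ := fun x => f (ret x)

/-- Standard basis of ℝ⁴. -/
def bas (i : Fin 4) : E4 := fun j => if j = i then 1 else 0

/-- Partial derivative ∂_i. -/
def pd (f : E4 → ℝ) (i : Fin 4) (x : E4) : ℝ := fderiv ℝ f x (bas i)

/-- Ambient Minkowski gradient (index raised with the Minkowski metric). -/
def mgrad (f : E4 → ℝ) (x : E4) : E4 := fun i => sg i * pd f i x

/-- Intrinsic gradient D^a f on H. -/
def grH (f : E4 → ℝ) (x : E4) : E4 := mgrad (Hz f) x

/-- Ambient Minkowski wave operator □ = ∂² + ∂² + ∂² − ∂². -/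
def boxm (f : E4 → ℝ) (x : E4) : ℝ := ∑ i, sg i * pd (pd f i) i x

/-- Intrinsic Laplacian D² f = q^{ab} D_a D_b f on H. -/
def D2H (f : E4 → ℝ) (x : E4) : ℝ := boxm (Hz f) x

/-- 0-homogeneous extension of a vector field on H. -/
def HzV (V : E4 → E4) : E4 → E4 := fun x => V (ret x)

/-- Intrinsic divergence D_a V^a on H of a tangent vector field. -/
def divH (V : E4 → E4) (x : E4) : ℝ := ∑ i, fderiv ℝ (HzV V) x (bas i) i

/-- `u` is tangent to H at `x`. -/
def Tang (x u : E4) : Prop := mk4 x u = 0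

/-- Intrinsic Hessian D_a D_b f on H, evaluated on (tangent) vectors u, v. -/
def HessH (f : E4 → ℝ) (x u v : E4) : ℝ :=
  fderiv ℝ (fun y => fderiv ℝ (Hz f) y v) x u

/-- The linear field α_k = ⟨k,·⟩; its restriction to H is an asymptotic translation. -/
def trfn (k : E4) : E4 → ℝ := fun x => mk4 k x

/-- `f` (restricted to H) is an asymptotic translation: D_a D_b f + f q_ab = 0. -/
def IsATrans (f : E4 → ℝ) : Prop :=
  ContDiffOn ℝ (⊤ : ℕ∞) f Ur ∧
  ∀ x ∈ Hb, ∀ u v : E4, Tang x u → Tang x v →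
    HessH f x u v + f x * mk4 u v = 0
open Set Filter Topology
open scoped ContDiff

namespace S5

/-- The joint domain. -/
def Sset : Set (ℝ × E4) := {p : ℝ × E4 | p.2 ∈ Ur}

lemma sg_sq (i : Fin 4) : sg i * sg i = 1 := by
  unfold sg; split <;> norm_num

lemma contDiff_q : ContDiff ℝ ∞ (fun z : E4 => mk4 z z) := by
  unfold mk4
  apply ContDiff.sum
  intro i _
  have hp : ContDiff ℝ ∞ (fun z : E4 => z i) :=
    (ContinuousLinearMap.proj (R := ℝ) (φ := fun _ : Fin 4 => ℝ) i).contDiff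
  exact (contDiff_const.mul hp).mul hp

lemma isOpen_Ur : IsOpen Ur :=
  isOpen_lt continuous_const contDiff_q.continuous

lemma isOpen_Sset : IsOpen Sset :=
  isOpen_Ur.preimage continuous_snd

lemma Hb_sub_Ur : Hb ⊆ Ur := fun x hx => by
  simp only [Hb, mem_setOf_eq] at hx
  simp only [Ur, mem_setOf_eq, hx]; norm_num

lemma mk4_smul (c : ℝ) (x : E4) : mk4 (c • x) (c • x) = c ^ 2 * mk4 x x := by
  unfold mk4; rw [Finset.mul_sum]
  refine Finset.sum_congr rfl fun i _ => ?_
  simp [Pi.smul_apply, smul_eq_mul]; ring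

lemma smul_mem_Ur {c : ℝ} (hc : 0 < c) {x : E4} (hx : x ∈ Ur) : c • x ∈ Ur := by
  simp only [Ur, mem_setOf_eq] at hx ⊢
  rw [mk4_smul]; positivity

lemma mk4_bas (z : E4) (i : Fin 4) : mk4 z (bas i) = sg i * z i := by
  unfold mk4 bas
  rw [Finset.sum_eq_single i] <;> simp +contextual

/-- Minkowski inner product with `z` as a continuous linear map. -/
def mkL (z : E4) : E4 →L[ℝ] ℝ := ∑ i, (sg i * z i) • (ContinuousLinearMap.proj i)

lemma mkL_apply (z u : E4) : mkL z u = mk4 z u := by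
  unfold mkL mk4
  rw [ContinuousLinearMap.sum_apply]
  refine Finset.sum_congr rfl fun i _ => ?_
  simp [mul_assoc]

lemma hasFDerivAt_q (z : E4) :
    HasFDerivAt (fun z : E4 => mk4 z z) ((2 : ℝ) • mkL z) z := by
  have h : HasFDerivAt (fun z : E4 => mk4 z z)
      (∑ i, ((sg i * z i) • (ContinuousLinearMap.proj i)
        + (sg i * z i) • (ContinuousLinearMap.proj (R := ℝ) (φ := fun _ : Fin 4 => ℝ) i))) z := by
    unfold mk4
    apply HasFDerivAt.fun_sum
    intro i _
    have hp : HasFDerivAt (fun z : E4 => z i)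
        (ContinuousLinearMap.proj (R := ℝ) (φ := fun _ : Fin 4 => ℝ) i) z :=
      (ContinuousLinearMap.proj (R := ℝ) (φ := fun _ : Fin 4 => ℝ) i).hasFDerivAt
    have := ((hp.const_mul (sg i)).fun_mul hp)
    refine this.congr_fderiv ?_
    ext u
    simp [ContinuousLinearMap.smul_apply, smul_eq_mul]
    ring
  refine h.congr_fderiv ?_
  ext u
  simp [mkL, ContinuousLinearMap.sum_apply, smul_eq_mul, ← Finset.sum_add_distrib]
  rw [Finset.mul_sum]
  refine Finset.sum_congr rfl fun i _ => ?_
  ring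

/-- Ω as a function on the exterior region. -/
def Om (z : E4) : ℝ := (Real.sqrt (mk4 z z))⁻¹

lemma Om_pos {z : E4} (hz : z ∈ Ur) : 0 < Om z := by
  have : 0 < mk4 z z := hz
  unfold Om; positivity

lemma Om_sq_mul {z : E4} (hz : z ∈ Ur) : Om z ^ 2 * mk4 z z = 1 := by
  have h : 0 < mk4 z z := hz
  unfold Om
  rw [inv_pow, Real.sq_sqrt h.le, inv_mul_cancel₀ h.ne']

lemma ret_eq (z : E4) : ret z = Om z • z := rfl

lemma ret_mem_Hb {z : E4} (hz : z ∈ Ur) : ret z ∈ Hb := by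
  have h : 0 < mk4 z z := hz
  simp only [Hb, mem_setOf_eq, ret_eq, mk4_smul]
  rw [← Om_sq_mul hz]

lemma hasFDerivAt_Om {z : E4} (hz : z ∈ Ur) :
    HasFDerivAt Om ((-(Om z) ^ 3) • mkL z) z := by
  have hq : 0 < mk4 z z := hz
  have hs : Real.sqrt (mk4 z z) ≠ 0 := by positivity
  have h1 : HasDerivAt (fun t : ℝ => (Real.sqrt t)⁻¹)
      (-(1 / (2 * Real.sqrt (mk4 z z))) / (Real.sqrt (mk4 z z)) ^ 2) (mk4 z z) :=
    (Real.hasDerivAt_sqrt hq.ne').inv hs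
  have h2 := h1.comp_hasFDerivAt (f := fun z : E4 => mk4 z z) z (hasFDerivAt_q z)
  have h3 : HasFDerivAt Om
      ((-(1 / (2 * Real.sqrt (mk4 z z))) / (Real.sqrt (mk4 z z)) ^ 2) • ((2:ℝ) • mkL z)) z := h2
  convert h3 using 1
  rw [smul_smul]
  congr 1
  have h4 : Real.sqrt (mk4 z z) > 0 := by positivity
  unfold Om
  field_simp

end S5
namespace S5
open Set Filter Topology
open scoped ContDiff

variable {G G₁ G₂ : ℝ × E4 → ℝ}

/-- ∂/∂s at the joint level. -/
def D1 (G : ℝ × E4 → ℝ) : ℝ × E4 → ℝ := fun p => fderiv ℝ G p ((1 : ℝ), (0 : E4))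

/-- spatial partial at the joint level. -/
def Dv (i : Fin 4) (G : ℝ × E4 → ℝ) : ℝ × E4 → ℝ := fun p => fderiv ℝ G p ((0 : ℝ), bas i)

lemma fderiv_congr_open {E F' : Type*} [NormedAddCommGroup E] [NormedSpace ℝ E]
    [NormedAddCommGroup F'] [NormedSpace ℝ F'] {f g : E → F'} {U : Set E} (hU : IsOpen U)
    (h : EqOn f g U) {x : E} (hx : x ∈ U) : fderiv ℝ f x = fderiv ℝ g x := by
  apply Filter.EventuallyEq.fderiv_eq
  filter_upwards [hU.mem_nhds hx] with y hy using h hy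

lemma diffAt_of_contDiffOn (hG : ContDiffOn ℝ ∞ G Sset) {p : ℝ × E4} (hp : p ∈ Sset) :
    DifferentiableAt ℝ G p :=
  ((hG.contDiffAt (isOpen_Sset.mem_nhds hp)).differentiableAt (by norm_num))

lemma contDiffOn_fderiv_apply (hG : ContDiffOn ℝ ∞ G Sset) (v : ℝ × E4) :
    ContDiffOn ℝ ∞ (fun p => fderiv ℝ G p v) Sset := by
  have h1 : ContDiffOn ℝ ∞ (fderiv ℝ G) Sset :=
    ((contDiffOn_infty_iff_fderiv_of_isOpen isOpen_Sset).1 hG).2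
  exact h1.clm_apply contDiffOn_const

lemma contDiffOn_D1 (hG : ContDiffOn ℝ ∞ G Sset) : ContDiffOn ℝ ∞ (D1 G) Sset :=
  contDiffOn_fderiv_apply hG _

lemma contDiffOn_Dv (hG : ContDiffOn ℝ ∞ G Sset) (i : Fin 4) :
    ContDiffOn ℝ ∞ (Dv i G) Sset :=
  contDiffOn_fderiv_apply hG _

lemma contDiffOn_D1_iter (hG : ContDiffOn ℝ ∞ G Sset) (n : ℕ) :
    ContDiffOn ℝ ∞ (D1^[n] G) Sset := by
  induction n generalizing G with
  | zero => exact hG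
  | succ n ih => rw [Function.iterate_succ_apply]; exact ih (contDiffOn_D1 hG)

lemma fderiv_apply_congr (h : EqOn G₁ G₂ Sset) (v : ℝ × E4) :
    EqOn (fun p => fderiv ℝ G₁ p v) (fun p => fderiv ℝ G₂ p v) Sset := by
  intro p hp
  simp only
  rw [fderiv_congr_open isOpen_Sset h hp]

lemma D1_iter_congr (h : EqOn G₁ G₂ Sset) (n : ℕ) :
    EqOn (D1^[n] G₁) (D1^[n] G₂) Sset := by
  induction n generalizing G₁ G₂ with
  | zero => exact h
  | succ n ih =>
    rw [Function.iterate_succ_apply, Function.iterate_succ_apply]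
    exact ih (fderiv_apply_congr h _)

/-- Clairaut / symmetry of second derivatives on the open joint domain. -/
lemma swapD (hG : ContDiffOn ℝ ∞ G Sset) {p : ℝ × E4} (hp : p ∈ Sset) (v w : ℝ × E4) :
    fderiv ℝ (fun q => fderiv ℝ G q v) p w = fderiv ℝ (fun q => fderiv ℝ G q w) p v := by
  have hmem := isOpen_Sset.mem_nhds hp
  have hfd : DifferentiableAt ℝ (fderiv ℝ G) p :=
    ((((contDiffOn_infty_iff_fderiv_of_isOpen isOpen_Sset).1 hG).2.contDiffAt
      hmem).differentiableAt (by norm_num))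
  have hsym : IsSymmSndFDerivAt ℝ G p :=
    (hG.contDiffAt hmem).isSymmSndFDerivAt (by simp; exact WithTop.coe_le_coe.2 le_top)
  have e1 : ∀ u : ℝ × E4, fderiv ℝ (fun q => fderiv ℝ G q u) p
      = (fderiv ℝ (fderiv ℝ G) p).flip u := by
    intro u
    rw [fderiv_clm_apply hfd (differentiableAt_const u)]
    simp
  rw [e1 v, e1 w]
  simpa using hsym w v

lemma D1_Dv_swap (hG : ContDiffOn ℝ ∞ G Sset) (i : Fin 4) :
    EqOn (D1 (Dv i G)) (Dv i (D1 G)) Sset := fun p hp =>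
  swapD hG hp _ _

lemma D1_iter_Dv_swap (hG : ContDiffOn ℝ ∞ G Sset) (i : Fin 4) (n : ℕ) :
    EqOn (D1^[n] (Dv i G)) (Dv i (D1^[n] G)) Sset := by
  induction n generalizing G with
  | zero => exact fun p hp => rfl
  | succ n ih =>
    intro p hp
    rw [Function.iterate_succ_apply]
    have h1 : EqOn (D1^[n] (D1 (Dv i G))) (D1^[n] (Dv i (D1 G))) Sset :=
      D1_iter_congr (D1_Dv_swap hG i) n
    rw [h1 hp, ih (contDiffOn_D1 hG) hp, Function.iterate_succ_apply]

/-- derivative along the s-line. -/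
lemma hasDerivAt_line (hG : ContDiffOn ℝ ∞ G Sset) {x : E4} (hx : x ∈ Ur) (s : ℝ) :
    HasDerivAt (fun t => G (t, x)) (D1 G (s, x)) s := by
  have hc : HasDerivAt (fun t : ℝ => ((t, x) : ℝ × E4)) ((1 : ℝ), (0 : E4)) s := by
    have h1 : HasDerivAt (fun t : ℝ => t) (1 : ℝ) s := hasDerivAt_id s
    have h2 : HasDerivAt (fun _ : ℝ => x) (0 : E4) s := hasDerivAt_const s x
    exact h1.prodMk h2
  have hd : DifferentiableAt ℝ G (s, x) := diffAt_of_contDiffOn hG (by exact hx)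
  have := HasFDerivAt.comp_hasDerivAt_of_eq (hl := hd.hasFDerivAt) (hf := hc) (hy := rfl)
  simpa [D1, Function.comp_def] using this

lemma deriv_line (hG : ContDiffOn ℝ ∞ G Sset) {x : E4} (hx : x ∈ Ur) (s : ℝ) :
    deriv (fun t => G (t, x)) s = D1 G (s, x) :=
  (hasDerivAt_line hG hx s).deriv

lemma iteratedDeriv_line (hG : ContDiffOn ℝ ∞ G Sset) {x : E4} (hx : x ∈ Ur) (n : ℕ) (s : ℝ) :
    iteratedDeriv n (fun t => G (t, x)) s = (D1^[n] G) (s, x) := by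
  induction n generalizing G with
  | zero => simp
  | succ n ih =>
    rw [iteratedDeriv_succ']
    have hder : deriv (fun t => G (t, x)) = fun t => D1 G (t, x) :=
      funext fun t => deriv_line hG hx t
    rw [hder, ih (contDiffOn_D1 hG), Function.iterate_succ_apply]

lemma contDiff_line (hG : ContDiffOn ℝ ∞ G Sset) {x : E4} (hx : x ∈ Ur) :
    ContDiff ℝ ∞ (fun t => G (t, x)) := by
  rw [← contDiffOn_univ]
  have hmap : MapsTo (fun t : ℝ => ((t, x) : ℝ × E4)) univ Sset := fun t _ => hx
  exact hG.comp ((contDiff_id.prodMk contDiff_const).contDiffOn) hmap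

/-- spatial slice derivative. -/
lemma pd_slice (hG : ContDiffOn ℝ ∞ G Sset) {x : E4} (hx : x ∈ Ur) (s : ℝ) (i : Fin 4) :
    pd (fun y => G (s, y)) i x = Dv i G (s, x) := by
  have hc : HasFDerivAt (fun y : E4 => ((s, y) : ℝ × E4))
      (ContinuousLinearMap.inr ℝ ℝ E4) x := by
    exact hasFDerivAt_prodMk_right s x
  have hd : DifferentiableAt ℝ G (s, x) := diffAt_of_contDiffOn hG (by exact hx)
  have hcomp := hd.hasFDerivAt.comp x hc
  unfold pd
  rw [show (fun y => G (s, y)) = G ∘ Prod.mk s from rfl, hcomp.fderiv]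
  simp [Dv]

lemma boxm_slice (hG : ContDiffOn ℝ ∞ G Sset) {x : E4} (hx : x ∈ Ur) (s : ℝ) :
    boxm (fun y => G (s, y)) x = ∑ i, sg i * Dv i (Dv i G) (s, x) := by
  unfold boxm pd
  refine Finset.sum_congr rfl fun i _ => ?_
  congr 1
  have h1 : EqOn (fun x => (fderiv ℝ (fun y => G (s, y)) x) (bas i))
      (fun y => Dv i G (s, y)) Ur := fun y hy => pd_slice hG hy s i
  rw [fderiv_congr_open isOpen_Ur h1 hx]
  exact pd_slice (contDiffOn_Dv hG i) hx s i

end S5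
namespace S5
open Set Filter Topology
open scoped ContDiff

variable {G : ℝ × E4 → ℝ}

/-- spatial scaling as a continuous linear map. -/
def scL (c : ℝ) : (ℝ × E4) →L[ℝ] (ℝ × E4) :=
  (ContinuousLinearMap.id ℝ ℝ).prodMap (c • ContinuousLinearMap.id ℝ E4)

lemma scL_apply (c : ℝ) (p : ℝ × E4) : scL c p = (p.1, c • p.2) := rfl

/-- `G` is spatially homogeneous of degree `-k` on the joint domain. -/
def HG (k : ℕ) (G : ℝ × E4 → ℝ) : Prop :=
  ∀ c : ℝ, 0 < c → ∀ p ∈ Sset, G p = c ^ k * G (p.1, c • p.2)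

lemma sc_mem {c : ℝ} (hc : 0 < c) {p : ℝ × E4} (hp : p ∈ Sset) :
    ((p.1, c • p.2) : ℝ × E4) ∈ Sset := smul_mem_Ur hc hp

lemma HG_fderiv (hG : ContDiffOn ℝ ∞ G Sset) {k : ℕ} (h : HG k G) {c : ℝ} (hc : 0 < c)
    {p : ℝ × E4} (hp : p ∈ Sset) (v : ℝ × E4) :
    fderiv ℝ G p v = c ^ k * fderiv ℝ G (p.1, c • p.2) (scL c v) := by
  have heq : EqOn G (fun q => c ^ k * G (scL c q)) Sset := by
    intro q hq
    simpa [scL_apply] using h c hc q hq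
  have hdG : DifferentiableAt ℝ (fun q => G (scL c q)) p := by
    have hd : DifferentiableAt ℝ G (scL c p) :=
      diffAt_of_contDiffOn hG (by rw [scL_apply]; exact sc_mem hc hp)
    exact hd.comp p (scL c).differentiableAt
  have h1 : fderiv ℝ G p = fderiv ℝ (fun q => c ^ k * G (scL c q)) p :=
    fderiv_congr_open isOpen_Sset heq hp
  rw [h1, fderiv_const_mul hdG]
  have h2 : fderiv ℝ (fun q => G (scL c q)) p
      = (fderiv ℝ G (scL c p)).comp (scL c) := by
    have hd : DifferentiableAt ℝ G (scL c p) :=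
      diffAt_of_contDiffOn hG (by rw [scL_apply]; exact sc_mem hc hp)
    exact (hd.hasFDerivAt.comp p (scL c).hasFDerivAt).fderiv
  rw [h2]
  simp [scL_apply]

lemma HG_D1 (hG : ContDiffOn ℝ ∞ G Sset) {k : ℕ} (h : HG k G) : HG k (D1 G) := by
  intro c hc p hp
  have := HG_fderiv hG h hc hp ((1 : ℝ), (0 : E4))
  simpa [D1, scL_apply] using this

lemma HG_Dv (hG : ContDiffOn ℝ ∞ G Sset) {k : ℕ} (h : HG k G) (i : Fin 4) :
    HG (k + 1) (Dv i G) := by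
  intro c hc p hp
  have h1 := HG_fderiv hG h hc hp ((0 : ℝ), bas i)
  have h2 : scL c ((0 : ℝ), bas i) = c • (((0 : ℝ), bas i) : ℝ × E4) := by
    simp [scL_apply, Prod.smul_def]
  rw [h2, (fderiv ℝ G (p.1, c • p.2)).map_smul] at h1
  simp only [Dv, smul_eq_mul] at h1 ⊢
  rw [h1]; ring

lemma HG_D1_iter (hG : ContDiffOn ℝ ∞ G Sset) {k : ℕ} (h : HG k G) (n : ℕ) :
    HG k (D1^[n] G) := by
  induction n generalizing G with
  | zero => exact h
  | succ n ih =>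
    rw [Function.iterate_succ_apply]
    exact ih (contDiffOn_D1 hG) (HG_D1 hG h)

lemma pair_decomp (z : E4) : (((0 : ℝ), z) : ℝ × E4) = ∑ i, z i • (((0 : ℝ), bas i) : ℝ × E4) := by
  rw [Prod.ext_iff]
  constructor
  · rw [Prod.fst_sum]; simp
  · simp only [Prod.snd_sum, Prod.smul_def, smul_eq_mul]
    funext j
    rw [Finset.sum_apply]
    simp only [Pi.smul_apply, bas, smul_eq_mul]
    rw [Finset.sum_eq_single j] <;> simp +contextual [eq_comm]

/-- Euler relation: the radial spatial derivative of a 0-homogeneous function vanishes. -/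
lemma euler (hG : ContDiffOn ℝ ∞ G Sset) (h : HG 0 G) {p : ℝ × E4} (hp : p ∈ Sset) :
    fderiv ℝ G p ((0 : ℝ), p.2) = 0 := by
  have hcur : HasDerivAt (fun c : ℝ => ((p.1, c • p.2) : ℝ × E4)) (((0 : ℝ), p.2)) 1 := by
    have h1 : HasDerivAt (fun c : ℝ => c • p.2) ((1 : ℝ) • p.2) 1 :=
      (hasDerivAt_id 1).smul_const p.2
    rw [one_smul] at h1
    exact (hasDerivAt_const (1 : ℝ) p.1).prodMk h1
  have hd : DifferentiableAt ℝ G (p.1, (1 : ℝ) • p.2) := by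
    rw [one_smul]
    exact diffAt_of_contDiffOn hG (by exact hp)
  have hp1 : p = (p.1, (1 : ℝ) • p.2) := by rw [one_smul]
  have hcomp : HasDerivAt (fun c : ℝ => G (p.1, c • p.2)) (fderiv ℝ G p ((0 : ℝ), p.2)) 1 := by
    have := HasFDerivAt.comp_hasDerivAt_of_eq (hl := (diffAt_of_contDiffOn hG hp).hasFDerivAt)
      (hf := hcur) (hy := hp1)
    simpa [Function.comp_def] using this
  have hconst : (fun c : ℝ => G (p.1, c • p.2)) =ᶠ[𝓝 (1 : ℝ)] fun _ => G p := by
    filter_upwards [Ioi_mem_nhds (by norm_num : (0:ℝ) < 1)] with c hc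
    have h0 := h c hc p hp
    rw [pow_zero, one_mul] at h0
    exact h0.symm
  have : deriv (fun c : ℝ => G (p.1, c • p.2)) 1 = 0 := by
    rw [hconst.deriv_eq]
    simp
  rw [← hcomp.deriv]
  exact this

lemma radial_zero (hG : ContDiffOn ℝ ∞ G Sset) (h : HG 0 G) {p : ℝ × E4} (hp : p ∈ Sset) :
    ∑ i, p.2 i * Dv i G p = 0 := by
  have h1 := euler hG h hp
  rw [pair_decomp p.2, map_sum] at h1
  simp only [map_smul, smul_eq_mul] at h1
  simpa [Dv] using h1

end S5
namespace S5
open Set Filter Topology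
open scoped ContDiff

variable {G : ℝ × E4 → ℝ}

lemma bas_self (i : Fin 4) : bas i i = 1 := by simp [bas]

lemma sum4 (c1 c2 c3 : ℝ) (t w v : Fin 4 → ℝ) :
    ∑ i, (c1 * t i + c2 + c3 * w i + v i)
      = c1 * (∑ i, t i) + 4 * c2 + c3 * (∑ i, w i) + ∑ i, v i := by
  rw [Finset.sum_add_distrib, Finset.sum_add_distrib, Finset.sum_add_distrib,
    ← Finset.mul_sum, ← Finset.mul_sum, Finset.sum_const]
  simp only [Finset.card_univ, Fintype.card_fin, nsmul_eq_mul]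
  ring

lemma sg_cases (i : Fin 4) : sg i = 1 ∨ sg i = -1 := by
  unfold sg; split <;> simp

lemma hasFDerivAt_comp (hG : ContDiffOn ℝ ∞ G Sset) {z : E4} (hz : z ∈ Ur) :
    HasFDerivAt (fun y => G (Om y, y))
      ((fderiv ℝ G (Om z, z)).comp
        (((-(Om z) ^ 3) • mkL z).prod (ContinuousLinearMap.id ℝ E4))) z := by
  have hχ : HasFDerivAt (fun y : E4 => ((Om y, y) : ℝ × E4))
      (((-(Om z) ^ 3) • mkL z).prod (ContinuousLinearMap.id ℝ E4)) z :=
    (hasFDerivAt_Om hz).prodMk (hasFDerivAt_id z)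
  have hd : DifferentiableAt ℝ G (Om z, z) := diffAt_of_contDiffOn hG (by exact hz)
  exact HasFDerivAt.comp (f := fun y : E4 => ((Om y, y) : ℝ × E4)) z hd.hasFDerivAt hχ

lemma pd_comp (hG : ContDiffOn ℝ ∞ G Sset) {z : E4} (hz : z ∈ Ur) (i : Fin 4) :
    fderiv ℝ (fun y => G (Om y, y)) z (bas i)
      = ((-(Om z) ^ 3) * (sg i * z i)) * D1 G (Om z, z) + Dv i G (Om z, z) := by
  rw [(hasFDerivAt_comp hG hz).fderiv]
  have hv : ((((-(Om z) ^ 3) • mkL z).prod (ContinuousLinearMap.id ℝ E4)) (bas i))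
      = ((-(Om z) ^ 3 * (sg i * z i)) : ℝ) • (((1 : ℝ), (0 : E4)) : ℝ × E4)
        + (((0 : ℝ), bas i) : ℝ × E4) := by
    simp [ContinuousLinearMap.prod_apply, mkL_apply, mk4_bas, Prod.ext_iff, mul_assoc]
  rw [ContinuousLinearMap.comp_apply, hv, map_add, map_smul]
  simp [D1, Dv]

lemma pd_A {z : E4} (hz : z ∈ Ur) (i : Fin 4) :
    fderiv ℝ (fun y : E4 => (-(Om y) ^ 3) * (sg i * y i)) z (bas i)
      = 3 * (Om z) ^ 5 * ((sg i * z i) * (sg i * z i)) - (Om z) ^ 3 * sg i := by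
  have hOm := hasFDerivAt_Om hz
  have hcube : HasFDerivAt (fun y : E4 => Om y * (Om y * Om y))
      (Om z • (Om z • ((-(Om z) ^ 3) • mkL z) + Om z • ((-(Om z) ^ 3) • mkL z))
        + (Om z * Om z) • ((-(Om z) ^ 3) • mkL z)) z := hOm.mul (hOm.mul hOm)
  have hproj : HasFDerivAt (fun y : E4 => y i)
      (ContinuousLinearMap.proj (R := ℝ) (φ := fun _ : Fin 4 => ℝ) i) z :=
    (ContinuousLinearMap.proj (R := ℝ) (φ := fun _ : Fin 4 => ℝ) i).hasFDerivAt
  have hlin : HasFDerivAt (fun y : E4 => sg i * y i)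
      ((sg i) • (ContinuousLinearMap.proj (R := ℝ) (φ := fun _ : Fin 4 => ℝ) i)) z :=
    hproj.const_mul (sg i)
  have hfun : (fun y : E4 => (-(Om y) ^ 3) * (sg i * y i))
      = fun y : E4 => (-(Om y * (Om y * Om y))) * (sg i * y i) := by
    funext y; ring
  rw [hfun, (hcube.fun_neg.fun_mul hlin).fderiv]
  simp only [ContinuousLinearMap.add_apply, ContinuousLinearMap.smul_apply,
    ContinuousLinearMap.neg_apply, mkL_apply, mk4_bas, ContinuousLinearMap.proj_apply,
    smul_eq_mul, bas_self]
  ring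

lemma pd2 (hG : ContDiffOn ℝ ∞ G Sset) {z : E4} (hz : z ∈ Ur) (i : Fin 4) :
    pd (pd (fun y => G (Om y, y)) i) i z
      = (3 * (Om z) ^ 5 * ((sg i * z i) * (sg i * z i)) - (Om z) ^ 3 * sg i) * D1 G (Om z, z)
        + ((-(Om z) ^ 3) * (sg i * z i)) * (((-(Om z) ^ 3) * (sg i * z i)) * D1 (D1 G) (Om z, z)
            + Dv i (D1 G) (Om z, z))
        + (((-(Om z) ^ 3) * (sg i * z i)) * D1 (Dv i G) (Om z, z)
            + Dv i (Dv i G) (Om z, z)) := by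
  have h1 : EqOn (fun x => (fderiv ℝ (fun y => G (Om y, y)) x) (bas i))
      (fun y => ((-(Om y) ^ 3) * (sg i * y i)) * D1 G (Om y, y) + Dv i G (Om y, y)) Ur :=
    fun y hy => pd_comp hG hy i
  unfold pd
  rw [fderiv_congr_open isOpen_Ur h1 hz]
  have hdA : DifferentiableAt ℝ (fun y : E4 => (-(Om y) ^ 3) * (sg i * y i)) z := by
    have hOm := (hasFDerivAt_Om hz).differentiableAt
    exact ((hOm.pow 3).neg).mul
      (((ContinuousLinearMap.proj (R := ℝ) (φ := fun _ : Fin 4 => ℝ)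
        i).differentiableAt).const_mul (sg i))
  have hdB : DifferentiableAt ℝ (fun y => D1 G (Om y, y)) z :=
    (hasFDerivAt_comp (contDiffOn_D1 hG) hz).differentiableAt
  have hdC : DifferentiableAt ℝ (fun y => Dv i G (Om y, y)) z :=
    (hasFDerivAt_comp (contDiffOn_Dv hG i) hz).differentiableAt
  rw [fderiv_fun_add (hdA.fun_mul hdB) hdC]
  rw [ContinuousLinearMap.add_apply, fderiv_fun_mul hdA hdB]
  rw [ContinuousLinearMap.add_apply, ContinuousLinearMap.smul_apply,
    ContinuousLinearMap.smul_apply]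
  rw [pd_comp (contDiffOn_D1 hG) hz i, pd_comp (contDiffOn_Dv hG i) hz i, pd_A hz i]
  simp only [smul_eq_mul]
  ring

/-- The wave operator in hyperbolic coordinates, acting on `G(Ω(y), y)`. -/
lemma main_chain (hG : ContDiffOn ℝ ∞ G Sset) (hhom : HG 0 G) {z : E4} (hz : z ∈ Ur) :
    boxm (fun y => G (Om y, y)) z
      = (Om z) ^ 4 * D1 (D1 G) (Om z, z) - (Om z) ^ 3 * D1 G (Om z, z)
        + ∑ i, sg i * Dv i (Dv i G) (Om z, z) := by
  have hzS : ((Om z, z) : ℝ × E4) ∈ Sset := hz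
  have key : ∀ i : Fin 4, sg i * pd (pd (fun y => G (Om y, y)) i) i z
      = (3 * (Om z) ^ 5 * D1 G (Om z, z) + (Om z) ^ 6 * D1 (D1 G) (Om z, z))
          * (sg i * (z i * z i))
        + (-(Om z) ^ 3 * D1 G (Om z, z))
        + (-2 * (Om z) ^ 3) * (z i * Dv i (D1 G) (Om z, z))
        + sg i * Dv i (Dv i G) (Om z, z) := by
    intro i
    rw [pd2 hG hz i]
    have hswap : D1 (Dv i G) (Om z, z) = Dv i (D1 G) (Om z, z) := D1_Dv_swap hG i hzS
    rw [hswap]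
    rcases sg_cases i with h | h <;> rw [h] <;> ring
  unfold boxm
  rw [Finset.sum_congr rfl (fun i _ => key i)]
  rw [sum4]
  have hmk : ∑ i, sg i * (z i * z i) = mk4 z z := by
    unfold mk4; exact Finset.sum_congr rfl fun i _ => by ring
  have hrad : ∑ i, z i * Dv i (D1 G) (Om z, z) = 0 :=
    radial_zero (contDiffOn_D1 hG) (HG_D1 hG hhom) hzS
  rw [hmk, hrad]
  have hOm := Om_sq_mul hz
  linear_combination (3 * (Om z) ^ 3 * D1 G (Om z, z) + (Om z) ^ 4 * D1 (D1 G) (Om z, z)) * hOm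

end S5
namespace S5
open Set Filter Topology
open scoped ContDiff

lemma natle (n : ℕ) : (n : WithTop ℕ∞) ≤ ∞ := by exact_mod_cast le_top

lemma iteratedDeriv_add_fun {f g : ℝ → ℝ} (hf : ContDiff ℝ ∞ f) (hg : ContDiff ℝ ∞ g)
    (n : ℕ) (x : ℝ) :
    iteratedDeriv n (fun s => f s + g s) x = iteratedDeriv n f x + iteratedDeriv n g x := by
  rw [← iteratedDerivWithin_univ, ← iteratedDerivWithin_univ, ← iteratedDerivWithin_univ]
  exact iteratedDerivWithin_add (mem_univ x) uniqueDiffOn_univ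
    ((hf.of_le (natle n)).contDiffWithinAt) ((hg.of_le (natle n)).contDiffWithinAt)

lemma iteratedDeriv_sub_fun {f g : ℝ → ℝ} (hf : ContDiff ℝ ∞ f) (hg : ContDiff ℝ ∞ g)
    (n : ℕ) (x : ℝ) :
    iteratedDeriv n (fun s => f s - g s) x = iteratedDeriv n f x - iteratedDeriv n g x := by
  rw [← iteratedDerivWithin_univ, ← iteratedDerivWithin_univ, ← iteratedDerivWithin_univ]
  exact iteratedDerivWithin_sub (mem_univ x) uniqueDiffOn_univ
    ((hf.of_le (natle n)).contDiffWithinAt) ((hg.of_le (natle n)).contDiffWithinAt)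

lemma iteratedDeriv_ext_Ioi {f g : ℝ → ℝ} (hf : ContDiff ℝ ∞ f) (hg : ContDiff ℝ ∞ g)
    (h : EqOn f g (Ioi (0 : ℝ))) (n : ℕ) : iteratedDeriv n f 0 = iteratedDeriv n g 0 := by
  have h1 : EqOn (iteratedDeriv n f) (iteratedDeriv n g) (Ioi 0) :=
    h.iteratedDeriv_of_isOpen isOpen_Ioi n
  have h2 : EqOn (iteratedDeriv n f) (iteratedDeriv n g) (closure (Ioi 0)) :=
    h1.closure (hf.continuous_iteratedDeriv n (natle n)) (hg.continuous_iteratedDeriv n (natle n))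
  exact h2 (by rw [closure_Ioi]; exact self_mem_Ici)

lemma iteratedDeriv_id_mul {u : ℝ → ℝ} (hu : ContDiff ℝ ∞ u) (n : ℕ) :
    iteratedDeriv n (fun s => s * u s) 0 = (n : ℝ) * iteratedDeriv (n - 1) u 0 := by
  induction n generalizing u with
  | zero => simp
  | succ n ih =>
    rw [iteratedDeriv_succ']
    have hu' : ContDiff ℝ ∞ (deriv u) := (contDiff_infty_iff_deriv.1 hu).2
    have hder : deriv (fun s => s * u s) = fun s => u s + s * deriv u s := by
      funext s
      rw [deriv_fun_mul differentiableAt_fun_id ((hu.differentiable (by norm_num)) s)]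
      simp
    rw [hder, iteratedDeriv_add_fun hu (show ContDiff ℝ ∞ (fun s : ℝ => s * deriv u s) from contDiff_id.mul hu') n 0, ih hu']
    cases n with
    | zero => simp
    | succ m =>
      have hs : iteratedDeriv (m + 1 - 1) (deriv u) 0 = iteratedDeriv (m + 1) u 0 := by
        rw [Nat.add_sub_cancel, ← iteratedDeriv_succ']
      rw [hs, Nat.add_sub_cancel]
      push_cast
      ring

lemma iteratedDeriv_sq_mul {u : ℝ → ℝ} (hu : ContDiff ℝ ∞ u) (n : ℕ) :
    iteratedDeriv n (fun s => s ^ 2 * u s) 0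
      = (n : ℝ) * ((n - 1 : ℕ) : ℝ) * iteratedDeriv (n - 2) u 0 := by
  have hfun : (fun s : ℝ => s ^ 2 * u s) = fun s => s * (s * u s) := by
    funext s; ring
  rw [hfun, iteratedDeriv_id_mul (show ContDiff ℝ ∞ (fun s : ℝ => s * u s) from contDiff_id.mul hu) n,
    iteratedDeriv_id_mul hu (n - 1)]
  have : n - 1 - 1 = n - 2 := by omega
  rw [this]
  ring

end S5
namespace S5
open Set Filter Topology
open scoped ContDiff

variable {G : ℝ × E4 → ℝ}

lemma boxm_congr {g1 g2 : E4 → ℝ} (h : EqOn g1 g2 Ur) {x : E4} (hx : x ∈ Ur) :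
    boxm g1 x = boxm g2 x := by
  unfold boxm pd
  refine Finset.sum_congr rfl fun i _ => ?_
  congr 1
  have h1 : EqOn (fun y => (fderiv ℝ g1 y) (bas i)) (fun y => (fderiv ℝ g2 y) (bas i)) Ur := by
    intro y hy
    simp only
    rw [fderiv_congr_open isOpen_Ur h hy]
  rw [fderiv_congr_open isOpen_Ur h1 hx]

lemma iteratedDeriv_const_mul_fun {f : ℝ → ℝ} (hf : ContDiff ℝ ∞ f) (c : ℝ) (n : ℕ) (x : ℝ) :
    iteratedDeriv n (fun s => c * f s) x = c * iteratedDeriv n f x := by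
  rw [← iteratedDerivWithin_univ, ← iteratedDerivWithin_univ]
  exact iteratedDerivWithin_const_mul (mem_univ x) uniqueDiffOn_univ c
    ((hf.of_le (natle n)).contDiffWithinAt)

lemma iteratedDeriv_sum_fin {w : Fin 4 → ℝ → ℝ} (hw : ∀ i, ContDiff ℝ ∞ (w i)) (n : ℕ)
    (x : ℝ) :
    iteratedDeriv n (fun s => ∑ i, w i s) x = ∑ i, iteratedDeriv n (w i) x := by
  have c01 : ContDiff ℝ ∞ (fun s => w 0 s + w 1 s) := (hw 0).add (hw 1)
  have c012 : ContDiff ℝ ∞ (fun s => w 0 s + w 1 s + w 2 s) := c01.add (hw 2)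
  simp only [Fin.sum_univ_four]
  rw [iteratedDeriv_add_fun c012 (hw 3), iteratedDeriv_add_fun c01 (hw 2),
    iteratedDeriv_add_fun (hw 0) (hw 1)]

lemma fderiv_fst_mul (hG : ContDiffOn ℝ ∞ G Sset) {p : ℝ × E4} (hp : p ∈ Sset) (v : ℝ × E4) :
    fderiv ℝ (fun q : ℝ × E4 => q.1 * G q) p v = p.1 * (fderiv ℝ G p v) + G p * v.1 := by
  have hd : DifferentiableAt ℝ G p := diffAt_of_contDiffOn hG hp
  have hfst : HasFDerivAt (fun q : ℝ × E4 => q.1) (ContinuousLinearMap.fst ℝ ℝ E4) p :=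
    (ContinuousLinearMap.fst ℝ ℝ E4).hasFDerivAt
  have hmul := hfst.fun_mul hd.hasFDerivAt
  rw [hmul.fderiv]
  simp

lemma contDiffOn_fst_mul (hG : ContDiffOn ℝ ∞ G Sset) :
    ContDiffOn ℝ ∞ (fun q : ℝ × E4 => q.1 * G q) Sset :=
  (contDiff_fst.contDiffOn).mul hG

lemma D1_of_mul (hG : ContDiffOn ℝ ∞ G Sset) :
    EqOn (D1 (fun q : ℝ × E4 => q.1 * G q)) (fun p => G p + p.1 * D1 G p) Sset := by
  intro p hp
  show fderiv ℝ (fun q : ℝ × E4 => q.1 * G q) p ((1 : ℝ), (0 : E4)) = _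
  rw [fderiv_fst_mul hG hp]
  simp only [D1]
  ring

lemma Dv_of_mul (hG : ContDiffOn ℝ ∞ G Sset) (i : Fin 4) :
    EqOn (Dv i (fun q : ℝ × E4 => q.1 * G q)) (fun p => p.1 * Dv i G p) Sset := by
  intro p hp
  show fderiv ℝ (fun q : ℝ × E4 => q.1 * G q) p ((0 : ℝ), bas i) = _
  rw [fderiv_fst_mul hG hp]
  simp [Dv]

lemma D1D1_of_mul (hG : ContDiffOn ℝ ∞ G Sset) {p : ℝ × E4} (hp : p ∈ Sset) :
    D1 (D1 (fun q : ℝ × E4 => q.1 * G q)) p = 2 * D1 G p + p.1 * D1 (D1 G) p := by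
  have h1 : D1 (D1 (fun q : ℝ × E4 => q.1 * G q)) p
      = fderiv ℝ (fun p => G p + p.1 * D1 G p) p ((1 : ℝ), (0 : E4)) := by
    show fderiv ℝ (D1 (fun q : ℝ × E4 => q.1 * G q)) p _ = _
    rw [fderiv_congr_open isOpen_Sset (D1_of_mul hG) hp]
  rw [h1]
  have hdG : DifferentiableAt ℝ G p := diffAt_of_contDiffOn hG hp
  have hdD1 : DifferentiableAt ℝ (fun q : ℝ × E4 => q.1 * D1 G q) p := by
    have hfst : DifferentiableAt ℝ (fun q : ℝ × E4 => q.1) p :=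
      (ContinuousLinearMap.fst ℝ ℝ E4).differentiableAt
    exact hfst.mul (diffAt_of_contDiffOn (contDiffOn_D1 hG) hp)
  rw [fderiv_fun_add hdG hdD1, ContinuousLinearMap.add_apply,
    fderiv_fst_mul (contDiffOn_D1 hG) hp]
  simp only [D1]
  ring

lemma DvDv_of_mul (hG : ContDiffOn ℝ ∞ G Sset) (i : Fin 4) {p : ℝ × E4} (hp : p ∈ Sset) :
    Dv i (Dv i (fun q : ℝ × E4 => q.1 * G q)) p = p.1 * Dv i (Dv i G) p := by
  have h1 : Dv i (Dv i (fun q : ℝ × E4 => q.1 * G q)) p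
      = fderiv ℝ (fun p => p.1 * Dv i G p) p ((0 : ℝ), bas i) := by
    show fderiv ℝ (Dv i (fun q : ℝ × E4 => q.1 * G q)) p _ = _
    rw [fderiv_congr_open isOpen_Sset (Dv_of_mul hG i) hp]
  rw [h1, fderiv_fst_mul (contDiffOn_Dv hG i) hp]
  simp [Dv]

end S5

/-
STATEMENT 5: Minkowski space with the standard hyperbolic completion Ω = (r²−t²)^{-1/2}:
the region r > |t| is `Ur`, and (Ω,y)-coordinates identify a point x ∈ Ur with
(Ω, y) = ((mk4 x x)^{-1/2}, ret x) ∈ (0,∞) × H, x = (1/Ω) • y.  For the rescaled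
normal n^a = Ω^{-4} g^{ab}∇_bΩ one computes n = ∂/∂Ω in these coordinates, so the n-th
remnant of φ = Ω^{-1}φ̃ is the n-th ∂_Ω-derivative at Ω = 0.  Asymptotic regularity of
order 1 is the existence of a smooth extension F(Ω, ·) of Ω^{-1}φ̃ up to Ω = 0
(represented below with its second argument 0-homogeneous, i.e. as a function of y ∈ H).
Claim: if φ̃ solves the wave equation then every remnant φⁿ satisfies D²φⁿ = (1−n²)φⁿ.
-/
theorem stmt5 (φt : E4 → ℝ) (hsm : ContDiffOn ℝ (⊤ : ℕ∞) φt Ur)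
    (hwave : ∀ x ∈ Ur, boxm φt x = 0)
    (F : ℝ → E4 → ℝ)
    (hF : ContDiffOn ℝ (⊤ : ℕ∞) (fun p : ℝ × E4 => F p.1 p.2) {p : ℝ × E4 | p.2 ∈ Ur})
    (hhom : ∀ (s c : ℝ), 0 < c → ∀ x ∈ Ur, F s (c • x) = F s x)
    (hmatch : ∀ s : ℝ, 0 < s → ∀ x ∈ Hb, F s x = (1 / s) * φt ((1 / s) • x)) :
    ∀ n : ℕ, ∀ x ∈ Hb,
      D2H (fun y => iteratedDeriv n (fun s => F s y) 0) x
        = (1 - (n : ℝ)^2) * iteratedDeriv n (fun s => F s x) 0 := by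
  intro n x hx
  open S5 in
  open scoped ContDiff in
  have hxU : x ∈ Ur := Hb_sub_Ur hx
  have h0x : ((0 : ℝ), x) ∈ Sset := hxU
  have hFs : ContDiffOn ℝ ∞ (fun p : ℝ × E4 => F p.1 p.2) Sset := hF.of_le (by simp)
  set Ft : ℝ × E4 → ℝ := fun p => F p.1 p.2 with hFtdef
  have hhom0 : HG 0 Ft := by
    intro c hc p hp
    simp only [pow_zero, one_mul]
    exact (hhom p.1 c hc p.2 hp).symm
  -- Step A: remove Hz
  have hHz : Set.EqOn (Hz (fun y => iteratedDeriv n (fun s => F s y) 0))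
      (fun y => iteratedDeriv n (fun s => F s y) 0) Ur := by
    intro y hy
    show iteratedDeriv n (fun s => F s (ret y)) 0 = iteratedDeriv n (fun s => F s y) 0
    congr 1
    funext s
    exact hhom s (Om y) (Om_pos hy) y hy
  have e0 : D2H (fun y => iteratedDeriv n (fun s => F s y) 0) x
      = boxm (fun y => iteratedDeriv n (fun s => F s y) 0) x :=
    boxm_congr hHz hxU
  -- Step B: slice to joint derivatives
  have hFn : Set.EqOn (fun y => iteratedDeriv n (fun s => F s y) 0)
      (fun y => (D1^[n] Ft) ((0 : ℝ), y)) Ur := fun y hy => iteratedDeriv_line hFs hy n 0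
  have e1 : boxm (fun y => iteratedDeriv n (fun s => F s y) 0) x
      = boxm (fun y => (D1^[n] Ft) ((0 : ℝ), y)) x := boxm_congr hFn hxU
  have e2 : boxm (fun y => (D1^[n] Ft) ((0 : ℝ), y)) x
      = ∑ i, sg i * Dv i (Dv i (D1^[n] Ft)) ((0 : ℝ), x) :=
    boxm_slice (contDiffOn_D1_iter hFs n) hxU 0
  -- Step C: commute s-derivatives past spatial ones
  have e3 : ∀ i : Fin 4, Dv i (Dv i (D1^[n] Ft)) ((0 : ℝ), x)
      = (D1^[n] (Dv i (Dv i Ft))) ((0 : ℝ), x) := by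
    intro i
    have e2' : Set.EqOn (D1^[n] (Dv i Ft)) (Dv i (D1^[n] Ft)) Sset :=
      D1_iter_Dv_swap hFs i n
    have e3' : Set.EqOn (Dv i (D1^[n] (Dv i Ft))) (Dv i (Dv i (D1^[n] Ft))) Sset :=
      fderiv_apply_congr e2' _
    rw [D1_iter_Dv_swap (contDiffOn_Dv hFs i) i n h0x, e3' h0x]
  -- Step D: identify with the iterated derivative of the line function
  have hwC : ∀ i : Fin 4, ContDiff ℝ ∞ (fun s => Dv i (Dv i Ft) (s, x)) := fun i =>
    contDiff_line (contDiffOn_Dv (contDiffOn_Dv hFs i) i) hxU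
  have e4 : ∑ i, sg i * (D1^[n] (Dv i (Dv i Ft))) ((0 : ℝ), x)
      = iteratedDeriv n (fun s => ∑ i, sg i * Dv i (Dv i Ft) (s, x)) 0 := by
    rw [iteratedDeriv_sum_fin (w := fun i s => sg i * Dv i (Dv i Ft) (s, x))
      (fun i => contDiff_const.mul (hwC i)) n 0]
    refine (Finset.sum_congr rfl fun i _ => ?_).symm
    rw [iteratedDeriv_const_mul_fun (hwC i) (sg i) n 0,
      iteratedDeriv_line (contDiffOn_Dv (contDiffOn_Dv hFs i) i) hxU n 0]
  -- Step E: the wave equation identity on the line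
  have hphi : Set.EqOn φt (fun y => Om y * Ft (Om y, y)) Ur := by
    intro y hy
    have hOp := Om_pos hy
    have h1 := hmatch (Om y) hOp (ret y) (ret_mem_Hb hy)
    have h2 : (1 / Om y) • ret y = y := by
      rw [ret_eq, smul_smul, one_div, inv_mul_cancel₀ hOp.ne', one_smul]
    rw [h2] at h1
    have h3 : F (Om y) (ret y) = F (Om y) y := by
      rw [ret_eq]
      exact hhom (Om y) (Om y) hOp y hy
    rw [h3] at h1
    show φt y = Om y * F (Om y) y
    rw [h1]
    field_simp
  have hHsm : ContDiffOn ℝ ∞ (fun q : ℝ × E4 => q.1 * Ft q) Sset := contDiffOn_fst_mul hFs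
  have hHhom : HG 0 (fun q : ℝ × E4 => q.1 * Ft q) := by
    intro c hc p hp
    simp only [pow_zero, one_mul]
    have h := hhom0 c hc p hp
    simp only [pow_zero, one_mul] at h
    rw [← h]
  have hkey : ∀ s ∈ Set.Ioi (0 : ℝ),
      (∑ i, sg i * Dv i (Dv i Ft) (s, x))
        = Ft (s, x) - s * D1 Ft (s, x) - s ^ 2 * D1 (D1 Ft) (s, x) := by
    intro s hs
    rw [Set.mem_Ioi] at hs
    set z : E4 := s⁻¹ • x with hzdef
    have hzU : z ∈ Ur := smul_mem_Ur (inv_pos.2 hs) hxU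
    have hmkz : mk4 z z = (s⁻¹) ^ 2 := by
      rw [hzdef, mk4_smul]
      have hx1 : mk4 x x = 1 := hx
      rw [hx1, mul_one]
    have hOmz : Om z = s := by
      unfold S5.Om
      rw [hmkz, Real.sqrt_sq (by positivity), inv_inv]
    have hzS : ((s, z) : ℝ × E4) ∈ Sset := hzU
    have hw0 : boxm (fun y => (fun q : ℝ × E4 => q.1 * Ft q) (Om y, y)) z = 0 := by
      have hE : Set.EqOn φt (fun y => (fun q : ℝ × E4 => q.1 * Ft q) (Om y, y)) Ur := hphi
      rw [← boxm_congr hE hzU]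
      exact hwave z hzU
    have hmc := main_chain hHsm hHhom hzU
    rw [hw0] at hmc
    have hOS : ((Om z, z) : ℝ × E4) ∈ Sset := hzU
    have hd11 : D1 (D1 (fun q : ℝ × E4 => q.1 * Ft q)) (Om z, z)
        = 2 * D1 Ft (Om z, z) + Om z * D1 (D1 Ft) (Om z, z) := D1D1_of_mul hFs hOS
    have hd1 : D1 (fun q : ℝ × E4 => q.1 * Ft q) (Om z, z)
        = Ft (Om z, z) + Om z * D1 Ft (Om z, z) := D1_of_mul hFs hOS
    rw [hd11, hd1] at hmc
    have hsum : ∑ i, sg i * Dv i (Dv i (fun q : ℝ × E4 => q.1 * Ft q)) (Om z, z)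
        = Om z * ∑ i, sg i * Dv i (Dv i Ft) (Om z, z) := by
      rw [Finset.mul_sum]
      refine Finset.sum_congr rfl fun i _ => ?_
      rw [DvDv_of_mul hFs i hOS]
      ring
    rw [hsum, hOmz] at hmc
    have hsx : s • z = x := by rw [hzdef, smul_smul, mul_inv_cancel₀ hs.ne', one_smul]
    have hz0 : Ft (s, z) = Ft (s, x) := by
      have h := hhom0 s hs (s, z) hzS
      simpa [hsx] using h
    have hz1 : D1 Ft (s, z) = D1 Ft (s, x) := by
      have h := HG_D1 hFs hhom0 s hs (s, z) hzS
      simpa [hsx] using h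
    have hz2 : D1 (D1 Ft) (s, z) = D1 (D1 Ft) (s, x) := by
      have h := HG_D1 (contDiffOn_D1 hFs) (HG_D1 hFs hhom0) s hs (s, z) hzS
      simpa [hsx] using h
    have hsum2 : ∑ i, sg i * Dv i (Dv i Ft) (s, z)
        = s ^ 2 * ∑ i, sg i * Dv i (Dv i Ft) (s, x) := by
      rw [Finset.mul_sum]
      refine Finset.sum_congr rfl fun i _ => ?_
      have h1 : HG 2 (Dv i (Dv i Ft)) :=
        HG_Dv (contDiffOn_Dv hFs i) (HG_Dv hFs hhom0 i) i
      have h := h1 s hs (s, z) hzS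
      simp only at h
      rw [hsx] at h
      rw [h]
      ring
    rw [hsum2, hz0, hz1, hz2] at hmc
    have hcube : (s : ℝ) ^ 3 ≠ 0 := by positivity
    have hfin : s ^ 3 * (∑ i, sg i * Dv i (Dv i Ft) (s, x))
        = s ^ 3 * (Ft (s, x) - s * D1 Ft (s, x) - s ^ 2 * D1 (D1 Ft) (s, x)) := by
      linear_combination -hmc
    exact mul_left_cancel₀ hcube hfin
  -- Step F: transfer to derivatives at 0
  have hf0 : ContDiff ℝ ∞ (fun s => Ft (s, x)) := contDiff_line hFs hxU
  have hf1 : ContDiff ℝ ∞ (fun s => D1 Ft (s, x)) := contDiff_line (contDiffOn_D1 hFs) hxU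
  have hf2 : ContDiff ℝ ∞ (fun s => D1 (D1 Ft) (s, x)) :=
    contDiff_line (contDiffOn_D1 (contDiffOn_D1 hFs)) hxU
  have hBxC : ContDiff ℝ ∞ (fun s => ∑ i, sg i * Dv i (Dv i Ft) (s, x)) :=
    ContDiff.sum fun i _ => contDiff_const.mul (hwC i)
  have hg1 : ContDiff ℝ ∞ (fun s : ℝ => s * D1 Ft (s, x)) := contDiff_id.mul hf1
  have hg2 : ContDiff ℝ ∞ (fun s : ℝ => s ^ 2 * D1 (D1 Ft) (s, x)) :=
    (contDiff_id.pow 2).mul hf2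
  have hsubC : ContDiff ℝ ∞ (fun s : ℝ => Ft (s, x) - s * D1 Ft (s, x)
      - s ^ 2 * D1 (D1 Ft) (s, x)) := (hf0.sub hg1).sub hg2
  have e5 : iteratedDeriv n (fun s => ∑ i, sg i * Dv i (Dv i Ft) (s, x)) 0
      = iteratedDeriv n (fun s => Ft (s, x) - s * D1 Ft (s, x)
          - s ^ 2 * D1 (D1 Ft) (s, x)) 0 :=
    iteratedDeriv_ext_Ioi hBxC hsubC (fun s hs => hkey s hs) n
  have e6 : iteratedDeriv n (fun s => Ft (s, x) - s * D1 Ft (s, x)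
      - s ^ 2 * D1 (D1 Ft) (s, x)) 0
      = iteratedDeriv n (fun s => Ft (s, x)) 0
        - (n : ℝ) * iteratedDeriv (n - 1) (fun s => D1 Ft (s, x)) 0
        - (n : ℝ) * ((n - 1 : ℕ) : ℝ)
            * iteratedDeriv (n - 2) (fun s => D1 (D1 Ft) (s, x)) 0 := by
    rw [iteratedDeriv_sub_fun (hf0.sub hg1) hg2 n 0, iteratedDeriv_sub_fun hf0 hg1 n 0,
      iteratedDeriv_id_mul hf1 n, iteratedDeriv_sq_mul hf2 n]
  have hder1 : (fun s => D1 Ft (s, x)) = deriv (fun s => Ft (s, x)) :=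
    funext fun s => (deriv_line hFs hxU s).symm
  have hder2 : (fun s => D1 (D1 Ft) (s, x)) = deriv (fun s => D1 Ft (s, x)) :=
    funext fun s => (deriv_line (contDiffOn_D1 hFs) hxU s).symm
  have hn1 : ∀ m : ℕ, iteratedDeriv m (fun s => D1 Ft (s, x)) 0
      = iteratedDeriv (m + 1) (fun s => Ft (s, x)) 0 := by
    intro m
    rw [hder1, ← iteratedDeriv_succ']
  have hn2 : ∀ m : ℕ, iteratedDeriv m (fun s => D1 (D1 Ft) (s, x)) 0
      = iteratedDeriv (m + 2) (fun s => Ft (s, x)) 0 := by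
    intro m
    rw [hder2, ← iteratedDeriv_succ', hn1 (m + 1)]
  -- Conclusion
  have hRT : (fun s => F s x) = (fun s => Ft (s, x)) := rfl
  rw [hRT, e0, e1, e2]
  simp only [e3]
  rw [e4, e5, e6]
  match n with
  | 0 => simp
  | 1 =>
    rw [hn1 0]
    norm_num
  | (k + 2) =>
    rw [show k + 2 - 1 = k + 1 from rfl, show k + 2 - 2 = k from rfl, hn1 (k + 1), hn2 k]
    push_cast
    ring
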